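/- Let c⁻, c⁺ > 0 and θ ∈ [0,1]. Let A be the 4×4 real matrix with rows R₁ = (1, θ/c⁺, θ²/(2(c⁺)²), θ³/(6(c⁺)³)), R₂ = (0, 1, θ/c⁺, θ²/(2(c⁺)²)), R₃ = (1, (θ−1)/c⁻, (θ−1)²/(2(c⁻)²), (θ−1)³/(6(c⁻)³)), R₄ = (0, 1, (θ−1)/c⁻, (θ−1)²/(2(c⁻)²)). Then det A = (c⁻·θ + c⁺·(1−θ))⁴ / (12·(c⁺·c⁻)⁴), and in particular det A > 0 for all θ ∈ [0,1]. -/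

import Mathlib

/-! The rows of `iimMatrix cm cp θ` are the values and first derivatives at the nodes `θ / cp` and
`(θ - 1) / cm` of the Taylor basis `1, x, x²/2, x³/6`, i.e. it is a two-node Hermite interpolation
matrix. Such a matrix has determinant `(a - b)⁴ / 12`, and here
`a - b = (cm θ + cp (1 - θ)) / (cp cm)`, whose numerator is a convex combination of the two speeds. -/

/-- The coefficient matrix of the linear system determining the immersed interface
cubic polynomial, for left/right wave speeds `cm = c⁻`, `cp = c⁺` and relative
interface location `θ = (x_j − α)/Δx`. -/
noncomputable def iimMatrix (cm cp θ : ℝ) : Matrix (Fin 4) (Fin 4) ℝ :=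
  !![1, θ/cp, θ^2/(2*cp^2), θ^3/(6*cp^3);
     0, 1, θ/cp, θ^2/(2*cp^2);
     1, (θ-1)/cm, (θ-1)^2/(2*cm^2), (θ-1)^3/(6*cm^3);
     0, 1, (θ-1)/cm, (θ-1)^2/(2*cm^2)]

def hermiteMatrix {K : Type*} [Field K] (a b : K) : Matrix (Fin 4) (Fin 4) K :=
  !![1, a, a^2/2, a^3/6;
     0, 1, a, a^2/2;
     1, b, b^2/2, b^3/6;
     0, 1, b, b^2/2]

theorem det_hermiteMatrix {K : Type*} [Field K] [CharZero K] (a b : K) :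
    (hermiteMatrix a b).det = (a - b)^4 / 12 := by
  simp [hermiteMatrix, Matrix.det_succ_row_zero, Fin.sum_univ_succ, Fin.succAbove]
  ring

theorem iimMatrix_eq_hermiteMatrix (cm cp θ : ℝ) :
    iimMatrix cm cp θ = hermiteMatrix (θ / cp) ((θ - 1) / cm) := by
  simp only [iimMatrix, hermiteMatrix, div_pow, div_div, mul_comm]

theorem det_iimMatrix {cm cp : ℝ} (hcm : cm ≠ 0) (hcp : cp ≠ 0) (θ : ℝ) :
    (iimMatrix cm cp θ).det = (cm * θ + cp * (1 - θ))^4 / (12 * (cp * cm)^4) := by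
  rw [iimMatrix_eq_hermiteMatrix, det_hermiteMatrix]
  field_simp
  ring

/-- `det A = (c⁻θ + c⁺(1−θ))⁴ / (12 (c⁺c⁻)⁴)`, which is positive
for `θ ∈ [0,1]` and `c⁻, c⁺ > 0`. -/
theorem stmt_14 (cm cp θ : ℝ) (hcm : 0 < cm) (hcp : 0 < cp)
    (hθ : θ ∈ Set.Icc (0:ℝ) 1) :
    (iimMatrix cm cp θ).det = (cm * θ + cp * (1 - θ))^4 / (12 * (cp * cm)^4) ∧
    0 < (iimMatrix cm cp θ).det := by
  have hdet := det_iimMatrix hcm.ne' hcp.ne' θ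
  have hweight : 0 < cm * θ + cp * (1 - θ) := by
    simpa only [smul_eq_mul, mul_comm θ, mul_comm (1 - θ), Set.mem_Ioi] using
      convex_Ioi (0 : ℝ) hcm hcp hθ.1 (sub_nonneg.2 hθ.2) (add_sub_cancel θ 1)
  exact ⟨hdet, hdet ▸ by positivity⟩
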